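/- Consistency of ERM (consequence of Theorem 1 stated in the paper): suppose the Rademacher complexities satisfy C(N) → 0 as N → ∞. For each N let Ĝ_N be an ε_N-approximate empirical risk minimizer on an i.i.d. sample of size N with ε_N → 0. Then for every δ ∈ (0,1) and every ρ > 0 there exists N₀ such that for all N ≥ N₀, with probability at least 1 − δ, L(Ĝ_N) − inf_{g ∈ ι} L(g) ≤ ρ. -/

import Mathlib

open MeasureTheory

noncomputable section

variable {Z : Type*} [MeasurableSpace Z] {ι : Type*}

/-- The empirical loss of hypothesis `g` on the sample `z` of size `N`:
`L_N(g)(z) = (1/N) ∑ᵢ f g (z i)`. -/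
def empLoss (f : ι → Z → ℝ) (N : ℕ) (g : ι) (z : Fin N → Z) : ℝ :=
  (1 / N) * ∑ i, f g (z i)

/-- The expected loss of hypothesis `g`: `L(g) = ∫ f g dμ`. -/
def expLoss (μ : Measure Z) (f : ι → Z → ℝ) (g : ι) : ℝ :=
  ∫ x, f g x ∂μ

/-- A Rademacher sign `±1` encoded by a Boolean. -/
def rsign (b : Bool) : ℝ := if b then 1 else -1

/-- The fair-coin measure on `Bool`, i.e. the distribution of one Rademacher sign. -/
def coinFlip : Measure Bool := (PMF.uniformOfFintype Bool).toMeasure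

/-- The Rademacher complexity of the class `ι` (composed with the loss `f`) with `N` samples:
`C(N) = E_{z ~ μ^N, ξ ~ Unif{±1}^N} [ sup_{g ∈ ι} (1/N) ∑ᵢ ξᵢ f g (zᵢ) ]`. -/
def radComplexity (μ : Measure Z) (f : ι → Z → ℝ) (N : ℕ) : ℝ :=
  ∫ p : (Fin N → Z) × (Fin N → Bool),
    ⨆ g : ι, (1 / N) * ∑ i, rsign (p.2 i) * f g (p.1 i)
    ∂((Measure.pi fun _ => μ).prod (Measure.pi fun _ => coinFlip))

/-!
Replacing `L(g)` by the empirical loss on an independent ghost sample, and then exchanging the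
two samples coordinatewise along random signs (which preserves their joint law), bounds the mean
of `D = sup_g (L(g) - L_N(g))` by `2 C(N)`. If `L(g₀) < inf L + ρ/4`, then
`L(Ĝ) ≤ L(g₀) + H + ε_N` with `H = D - (L(g₀) - L_N(g₀)) ≥ 0` and `E H = E D ≤ 2 C(N)`, so
Markov's inequality for `H` gives the claim as soon as `ε_N < ρ/4` and `C(N) < δρ/4`.
-/

open Filter

instance isProbabilityMeasure_coinFlip : IsProbabilityMeasure coinFlip := by
  unfold coinFlip; infer_instance

lemma coinFlip_singleton (b : Bool) : coinFlip {b} = 2⁻¹ := by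
  simp [coinFlip]

lemma measurePreserving_not_coinFlip : MeasurePreserving not coinFlip coinFlip :=
  ⟨measurable_of_finite _, Measure.ext_iff_singleton.2 fun b => by
    rw [Measure.map_apply (measurable_of_finite _) (measurableSet_singleton b)]
    simp [Set.preimage, coinFlip_singleton]⟩

lemma abs_rsign (b : Bool) : |rsign b| = 1 := by cases b <;> simp [rsign]

lemma abs_one_div_mul_sum_le {N : ℕ} {a : Fin N → ℝ} {c : ℝ} (hc : 0 ≤ c)
    (h : ∀ i, |a i| ≤ c) : |1 / (N : ℝ) * ∑ i, a i| ≤ c := by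
  rcases N.eq_zero_or_pos with rfl | hN
  · simpa using hc
  have hsum : |∑ i, a i| ≤ N * c := by
    simpa using (Finset.abs_sum_le_sum_abs a Finset.univ).trans (Finset.sum_le_sum fun i _ => h i)
  rw [abs_mul, abs_of_pos (by positivity), one_div_mul_eq_div, div_le_iff₀ (by positivity)]
  linarith

lemma bddAbove_range_of_abs_le {u : ι → ℝ} {c : ℝ} (h : ∀ g, |u g| ≤ c) :
    BddAbove (Set.range u) :=
  ⟨c, Set.forall_mem_range.2 fun g => (abs_le.1 (h g)).2⟩

lemma bddBelow_range_of_abs_le {u : ι → ℝ} {c : ℝ} (h : ∀ g, |u g| ≤ c) :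
    BddBelow (Set.range u) :=
  ⟨-c, Set.forall_mem_range.2 fun g => (abs_le.1 (h g)).1⟩

lemma abs_ciSup_le_of_abs_le [Nonempty ι] {u : ι → ℝ} {c : ℝ} (h : ∀ g, |u g| ≤ c) :
    |⨆ g, u g| ≤ c :=
  abs_le.2 ⟨(abs_le.1 (h (Classical.arbitrary ι))).1.trans
    (le_ciSup (bddAbove_range_of_abs_le h) _), ciSup_le fun g => (abs_le.1 (h g)).2⟩

lemma integrable_of_abs_le {α : Type*} [MeasurableSpace α] {P : Measure α} [IsFiniteMeasure P]
    {h : α → ℝ} (hm : Measurable h) {c : ℝ} (hc : ∀ x, |h x| ≤ c) : Integrable h P :=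
  .of_bound hm.aestronglyMeasurable c (ae_of_all _ hc)

lemma MeasureTheory.MeasurePreserving.integral_comp_of_measurable {α β : Type*}
    [MeasurableSpace α] [MeasurableSpace β] {μa : Measure α} {μb : Measure β} {T : α → β}
    (hT : MeasurePreserving T μa μb) {u : β → ℝ} (hu : Measurable u) :
    ∫ x, u (T x) ∂μa = ∫ y, u y ∂μb := by
  rw [← hT.map_eq, integral_map hT.measurable.aemeasurable hu.aestronglyMeasurable]

lemma ofReal_one_sub_integral_div_le_measure_lt {α : Type*} [MeasurableSpace α] {P : Measure α}
    [IsProbabilityMeasure P] {h : α → ℝ} (hm : Measurable h) (h0 : ∀ x, 0 ≤ h x)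
    (hint : Integrable h P) {s : ℝ} (hs : 0 < s) :
    ENNReal.ofReal (1 - (∫ x, h x ∂P) / s) ≤ P {x | h x < s} := by
  have hmarkov := mul_meas_ge_le_integral_of_nonneg (ae_of_all _ h0) hint s
  have hcompl : {x | h x < s} = {x | s ≤ h x}ᶜ := by ext; simp
  rw [← ofReal_measureReal, hcompl,
    probReal_compl_eq_one_sub (measurableSet_le measurable_const hm)]
  refine ENNReal.ofReal_le_ofReal (sub_le_sub_left ?_ 1)
  rw [le_div_iff₀ hs]
  linarith

section SwapAt

variable {α κ : Type*}

def swapAt (s : κ → Bool) (p : (κ → α) × (κ → α)) : (κ → α) × (κ → α) :=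
  (fun i => if s i then p.1 i else p.2 i, fun i => if s i then p.2 i else p.1 i)

variable [MeasurableSpace α]

lemma measurable_swapAt_uncurry :
    Measurable fun q : (κ → Bool) × ((κ → α) × (κ → α)) => swapAt q.1 q.2 := by
  have hset : ∀ i, MeasurableSet {q : (κ → Bool) × ((κ → α) × (κ → α)) | q.1 i = true} :=
    fun i => measurableSet_eq_fun (by fun_prop) measurable_const
  exact (measurable_pi_lambda _ fun i => .ite (hset i) (by fun_prop) (by fun_prop)).prodMk
    (measurable_pi_lambda _ fun i => .ite (hset i) (by fun_prop) (by fun_prop))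

variable [Fintype κ]

lemma measurePreserving_swapAt (μ : Measure α) [SigmaFinite μ] (s : κ → Bool) :
    MeasurePreserving (swapAt s) ((Measure.pi fun _ : κ => μ).prod (Measure.pi fun _ => μ))
      ((Measure.pi fun _ : κ => μ).prod (Measure.pi fun _ => μ)) := by
  let e := MeasurableEquiv.arrowProdEquivProdArrow α α κ
  have he : MeasurePreserving e (Measure.pi fun _ => μ.prod μ)
      ((Measure.pi fun _ : κ => μ).prod (Measure.pi fun _ => μ)) :=
    measurePreserving_arrowProdEquivProdArrow α α κ (fun _ => μ) (fun _ => μ)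
  have hflip : MeasurePreserving (fun (w : κ → α × α) i => if s i then w i else (w i).swap)
      (Measure.pi fun _ => μ.prod μ) (Measure.pi fun _ => μ.prod μ) :=
    measurePreserving_pi (fun _ => μ.prod μ) (fun _ => μ.prod μ)
      (f := fun i q => if s i then q else q.swap) fun i => by
        cases s i
        exacts [Measure.measurePreserving_swap, MeasurePreserving.id _]
  have hfactor : swapAt s = e ∘ (fun w i => if s i then w i else (w i).swap) ∘ e.symm := by
    funext p
    ext i <;> by_cases h : s i <;>
      simp [swapAt, e, h, MeasurableEquiv.arrowProdEquivProdArrow, Equiv.arrowProdEquivProdArrow]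
  rw [hfactor]
  exact he.comp (hflip.comp he.symm)

lemma integral_comp_swapAt (μ : Measure α) [IsFiniteMeasure μ] (P : Measure (κ → Bool))
    [IsProbabilityMeasure P] {G : (κ → α) × (κ → α) → ℝ} (hG : Measurable G) {c : ℝ}
    (hc : ∀ p, |G p| ≤ c) :
    ∫ q, G (swapAt q.1 q.2) ∂(P.prod ((Measure.pi fun _ => μ).prod (Measure.pi fun _ => μ))) =
      ∫ p, G p ∂((Measure.pi fun _ : κ => μ).prod (Measure.pi fun _ => μ)) := by
  have hswap : ∀ s, ∫ p, G (swapAt s p) ∂((Measure.pi fun _ => μ).prod (Measure.pi fun _ => μ)) =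
      ∫ p, G p ∂((Measure.pi fun _ : κ => μ).prod (Measure.pi fun _ => μ)) := fun s =>
    (measurePreserving_swapAt μ s).integral_comp_of_measurable hG
  rw [integral_prod _ (integrable_of_abs_le (h := fun q => G (swapAt q.1 q.2))
    (hG.comp measurable_swapAt_uncurry) fun q => hc _)]
  simp [hswap]

end SwapAt

def uniformDeviation (μ : Measure Z) (f : ι → Z → ℝ) (N : ℕ) (z : Fin N → Z) : ℝ :=
  ⨆ g, (expLoss μ f g - empLoss f N g z)

def ghostDeviation (f : ι → Z → ℝ) (N : ℕ) (p : (Fin N → Z) × (Fin N → Z)) : ℝ :=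
  ⨆ g, (empLoss f N g p.2 - empLoss f N g p.1)

/-- `radComplexity μ f N` is, by definition, the integral of
`Function.uncurry (rademacherSup f N)`. -/
def rademacherSup (f : ι → Z → ℝ) (N : ℕ) (z : Fin N → Z) (ξ : Fin N → Bool) : ℝ :=
  ⨆ g, (1 / N : ℝ) * ∑ i, rsign (ξ i) * f g (z i)

section Bounds

variable {α : Type*} {f : ι → α → ℝ} {N : ℕ}

lemma abs_empLoss_le (hf : ∀ g x, |f g x| ≤ 1) (g : ι) (z : Fin N → α) :
    |empLoss f N g z| ≤ 1 :=
  abs_one_div_mul_sum_le zero_le_one fun i => hf g (z i)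

lemma abs_empLoss_sub_empLoss_le (hf : ∀ g x, |f g x| ≤ 1) (g : ι) (z z' : Fin N → α) :
    |empLoss f N g z' - empLoss f N g z| ≤ 2 := by
  linarith [abs_sub (empLoss f N g z') (empLoss f N g z), abs_empLoss_le hf g z,
    abs_empLoss_le hf g z']

lemma abs_ghostDeviation_le [Nonempty ι] (hf : ∀ g x, |f g x| ≤ 1)
    (p : (Fin N → α) × (Fin N → α)) : |ghostDeviation f N p| ≤ 2 :=
  abs_ciSup_le_of_abs_le fun g => abs_empLoss_sub_empLoss_le hf g p.1 p.2

lemma abs_rademacherAvg_le (hf : ∀ g x, |f g x| ≤ 1) (g : ι) (z : Fin N → α)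
    (ξ : Fin N → Bool) : |(1 / N : ℝ) * ∑ i, rsign (ξ i) * f g (z i)| ≤ 1 :=
  abs_one_div_mul_sum_le zero_le_one fun i => by rw [abs_mul, abs_rsign, one_mul]; exact hf g _

lemma abs_rademacherSup_le [Nonempty ι] (hf : ∀ g x, |f g x| ≤ 1) (z : Fin N → α)
    (ξ : Fin N → Bool) : |rademacherSup f N z ξ| ≤ 1 :=
  abs_ciSup_le_of_abs_le fun g => abs_rademacherAvg_le hf g z ξ

lemma empLoss_swapAt_sub (ξ : Fin N → Bool) (p : (Fin N → α) × (Fin N → α)) (g : ι) :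
    empLoss f N g (swapAt ξ p).2 - empLoss f N g (swapAt ξ p).1 =
      (1 / N : ℝ) * ∑ i, rsign (ξ i) * f g (p.2 i) +
        (1 / N : ℝ) * ∑ i, rsign (!ξ i) * f g (p.1 i) := by
  simp only [empLoss, swapAt, ← mul_sub, ← mul_add, ← Finset.sum_sub_distrib,
    ← Finset.sum_add_distrib]
  congr 1
  refine Finset.sum_congr rfl fun i _ => ?_
  cases ξ i <;> simp [rsign] <;> ring

lemma ghostDeviation_swapAt_le [Nonempty ι] (hf : ∀ g x, |f g x| ≤ 1) (ξ : Fin N → Bool)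
    (p : (Fin N → α) × (Fin N → α)) :
    ghostDeviation f N (swapAt ξ p) ≤
      rademacherSup f N p.2 ξ + rademacherSup f N p.1 (fun i => !ξ i) :=
  ciSup_le fun g => (empLoss_swapAt_sub ξ p g).trans_le <| add_le_add
    (le_ciSup (bddAbove_range_of_abs_le fun g => abs_rademacherAvg_le hf g p.2 ξ) g)
    (le_ciSup (bddAbove_range_of_abs_le fun g => abs_rademacherAvg_le hf g p.1 (fun i => !ξ i)) g)

end Bounds

section Symmetrization

variable {μ : Measure Z} {f : ι → Z → ℝ} {N : ℕ}

lemma measurable_empLoss (hmeas : ∀ g, Measurable (f g)) (g : ι) :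
    Measurable (empLoss f N g) := by
  unfold empLoss
  fun_prop

lemma measurable_uniformDeviation [Countable ι] (hmeas : ∀ g, Measurable (f g)) :
    Measurable (uniformDeviation μ f N) :=
  .iSup fun g => measurable_const.sub (measurable_empLoss hmeas g)

lemma measurable_ghostDeviation [Countable ι] (hmeas : ∀ g, Measurable (f g)) :
    Measurable (ghostDeviation f N) :=
  .iSup fun g => ((measurable_empLoss hmeas g).comp measurable_snd).sub
    ((measurable_empLoss hmeas g).comp measurable_fst)

lemma measurable_rademacherSup [Countable ι] (hmeas : ∀ g, Measurable (f g)) :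
    Measurable (Function.uncurry (rademacherSup f N)) :=
  .iSup fun g => measurable_const.mul <| Finset.measurable_sum _ fun i _ =>
    ((measurable_of_finite rsign).comp ((measurable_pi_apply i).comp measurable_snd)).mul
      ((hmeas g).comp ((measurable_pi_apply i).comp measurable_fst))

variable [IsProbabilityMeasure μ]

lemma abs_expLoss_le (hf : ∀ g x, |f g x| ≤ 1) (g : ι) : |expLoss μ f g| ≤ 1 := by
  simpa [expLoss] using norm_integral_le_of_norm_le_const
    (ae_of_all μ fun x => (Real.norm_eq_abs _).trans_le (hf g x))

lemma abs_expLoss_sub_empLoss_le (hf : ∀ g x, |f g x| ≤ 1) (g : ι) (z : Fin N → Z) :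
    |expLoss μ f g - empLoss f N g z| ≤ 2 := by
  linarith [abs_sub (expLoss μ f g) (empLoss f N g z), abs_expLoss_le (μ := μ) hf g,
    abs_empLoss_le hf g z]

lemma sub_le_uniformDeviation (hf : ∀ g x, |f g x| ≤ 1) (g : ι) (z : Fin N → Z) :
    expLoss μ f g - empLoss f N g z ≤ uniformDeviation μ f N z :=
  le_ciSup (bddAbove_range_of_abs_le fun g => abs_expLoss_sub_empLoss_le hf g z) g

lemma abs_uniformDeviation_le [Nonempty ι] (hf : ∀ g x, |f g x| ≤ 1) (z : Fin N → Z) :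
    |uniformDeviation μ f N z| ≤ 2 :=
  abs_ciSup_le_of_abs_le fun g => abs_expLoss_sub_empLoss_le hf g z

lemma integral_empLoss (hmeas : ∀ g, Measurable (f g)) (hf : ∀ g x, |f g x| ≤ 1) (hN : 0 < N)
    (g : ι) : ∫ z, empLoss f N g z ∂(Measure.pi fun _ => μ) = expLoss μ f g := by
  have hcoord : ∀ i : Fin N, ∫ z, f g (z i) ∂(Measure.pi fun _ => μ) = expLoss μ f g := fun i =>
    (measurePreserving_eval (fun _ => μ) i).integral_comp_of_measurable (hmeas g)
  unfold empLoss
  rw [integral_const_mul, integral_finsetSum _ fun i _ =>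
    integrable_of_abs_le (h := fun z : Fin N → Z => f g (z i))
      ((hmeas g).comp (measurable_pi_apply i)) fun z => hf g (z i)]
  simp only [hcoord, Finset.sum_const, Finset.card_univ, Fintype.card_fin, nsmul_eq_mul]
  field_simp

lemma uniformDeviation_le_integral_ghostDeviation [Countable ι] [Nonempty ι]
    (hmeas : ∀ g, Measurable (f g)) (hf : ∀ g x, |f g x| ≤ 1) (hN : 0 < N) (z : Fin N → Z) :
    uniformDeviation μ f N z ≤ ∫ z', ghostDeviation f N (z, z') ∂(Measure.pi fun _ => μ) := by
  refine ciSup_le fun g => ?_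
  have hint : Integrable (empLoss f N g) (Measure.pi fun _ => μ) :=
    integrable_of_abs_le (measurable_empLoss hmeas g) (abs_empLoss_le hf g)
  calc expLoss μ f g - empLoss f N g z
      = ∫ z', (empLoss f N g z' - empLoss f N g z) ∂(Measure.pi fun _ => μ) := by
        rw [integral_sub hint (integrable_const _), integral_empLoss hmeas hf hN, integral_const]
        simp
    _ ≤ ∫ z', ghostDeviation f N (z, z') ∂(Measure.pi fun _ => μ) :=
        integral_mono (hint.sub (integrable_const _))
          (integrable_of_abs_le ((measurable_ghostDeviation hmeas).comp measurable_prodMk_left)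
            fun z' => abs_ghostDeviation_le hf (z, z'))
          fun z' => le_ciSup (bddAbove_range_of_abs_le fun g =>
            abs_empLoss_sub_empLoss_le hf g z z') g

lemma integral_rademacherSup_snd [Countable ι] (hmeas : ∀ g, Measurable (f g)) :
    ∫ q, rademacherSup f N q.2.2 q.1 ∂((Measure.pi fun _ : Fin N => coinFlip).prod
      ((Measure.pi fun _ : Fin N => μ).prod (Measure.pi fun _ : Fin N => μ))) =
      radComplexity μ f N :=
  (Measure.measurePreserving_swap.comp ((MeasurePreserving.id _).prod
    measurePreserving_snd)).integral_comp_of_measurable (measurable_rademacherSup hmeas)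

lemma integral_rademacherSup_fst_not [Countable ι] (hmeas : ∀ g, Measurable (f g)) :
    ∫ q, rademacherSup f N q.2.1 (fun i => !q.1 i) ∂((Measure.pi fun _ : Fin N => coinFlip).prod
      ((Measure.pi fun _ : Fin N => μ).prod (Measure.pi fun _ : Fin N => μ))) =
      radComplexity μ f N := by
  have hnot : MeasurePreserving (fun ξ : Fin N → Bool => fun i => !ξ i)
      (Measure.pi fun _ => coinFlip) (Measure.pi fun _ => coinFlip) :=
    measurePreserving_pi _ _ fun _ => measurePreserving_not_coinFlip
  exact (((MeasurePreserving.id _).prod hnot).comp (Measure.measurePreserving_swap.comp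
    ((MeasurePreserving.id _).prod measurePreserving_fst))).integral_comp_of_measurable
    (measurable_rademacherSup hmeas)

lemma integral_ghostDeviation_le [Countable ι] [Nonempty ι] (hmeas : ∀ g, Measurable (f g))
    (hf : ∀ g x, |f g x| ≤ 1) :
    ∫ p, ghostDeviation f N p ∂((Measure.pi fun _ => μ).prod (Measure.pi fun _ => μ)) ≤
      2 * radComplexity μ f N := by
  set ν := Measure.pi fun _ : Fin N => μ
  set β := Measure.pi fun _ : Fin N => coinFlip
  have hR : Measurable (Function.uncurry (rademacherSup f N)) := measurable_rademacherSup hmeas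
  have hRsnd : Integrable (fun q : (Fin N → Bool) × ((Fin N → Z) × (Fin N → Z)) =>
      rademacherSup f N q.2.2 q.1) (β.prod (ν.prod ν)) :=
    integrable_of_abs_le (by fun_prop) fun q => abs_rademacherSup_le hf _ _
  have hRfst : Integrable (fun q : (Fin N → Bool) × ((Fin N → Z) × (Fin N → Z)) =>
      rademacherSup f N q.2.1 (fun i => !q.1 i)) (β.prod (ν.prod ν)) :=
    integrable_of_abs_le (by fun_prop) fun q => abs_rademacherSup_le hf _ _
  calc ∫ p, ghostDeviation f N p ∂(ν.prod ν)
      = ∫ q, ghostDeviation f N (swapAt q.1 q.2) ∂(β.prod (ν.prod ν)) :=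
        (integral_comp_swapAt μ β (measurable_ghostDeviation hmeas) (abs_ghostDeviation_le hf)).symm
    _ ≤ ∫ q, (rademacherSup f N q.2.2 q.1 + rademacherSup f N q.2.1 (fun i => !q.1 i))
          ∂(β.prod (ν.prod ν)) :=
        integral_mono (integrable_of_abs_le
            ((measurable_ghostDeviation hmeas).comp measurable_swapAt_uncurry)
            fun q => abs_ghostDeviation_le hf _)
          (hRsnd.add hRfst) fun q => ghostDeviation_swapAt_le hf q.1 q.2
    _ = 2 * radComplexity μ f N := by
        rw [integral_add hRsnd hRfst, integral_rademacherSup_snd hmeas,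
          integral_rademacherSup_fst_not hmeas, two_mul]

theorem integral_uniformDeviation_le [Countable ι] [Nonempty ι]
    (hmeas : ∀ g, Measurable (f g)) (hf : ∀ g x, |f g x| ≤ 1) (hN : 0 < N) :
    ∫ z, uniformDeviation μ f N z ∂(Measure.pi fun _ => μ) ≤ 2 * radComplexity μ f N := by
  have hint : Integrable (ghostDeviation f N)
      ((Measure.pi fun _ => μ).prod (Measure.pi fun _ => μ)) :=
    integrable_of_abs_le (measurable_ghostDeviation hmeas) (abs_ghostDeviation_le hf)
  calc ∫ z, uniformDeviation μ f N z ∂(Measure.pi fun _ => μ)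
      ≤ ∫ z, ∫ z', ghostDeviation f N (z, z') ∂(Measure.pi fun _ => μ)
          ∂(Measure.pi fun _ => μ) :=
        integral_mono
          (integrable_of_abs_le (measurable_uniformDeviation hmeas) (abs_uniformDeviation_le hf))
          hint.integral_prod_left (uniformDeviation_le_integral_ghostDeviation hmeas hf hN)
    _ = ∫ p, ghostDeviation f N p ∂((Measure.pi fun _ => μ).prod (Measure.pi fun _ => μ)) :=
        (integral_prod _ hint).symm
    _ ≤ 2 * radComplexity μ f N := integral_ghostDeviation_le hmeas hf

end Symmetrization

section ApproximateERM

variable {μ : Measure Z} [IsProbabilityMeasure μ] {f : ι → Z → ℝ} {N : ℕ}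

lemma expLoss_le_of_le_iInf_empLoss_add (hf : ∀ g x, |f g x| ≤ 1) {ĝ : ι} {z : Fin N → Z}
    {e : ℝ} (hĝ : empLoss f N ĝ z ≤ (⨅ g, empLoss f N g z) + e) (g₀ : ι) :
    expLoss μ f ĝ ≤ empLoss f N g₀ z + uniformDeviation μ f N z + e := by
  have hdev := sub_le_uniformDeviation (μ := μ) hf ĝ z
  have hinf : (⨅ g, empLoss f N g z) ≤ empLoss f N g₀ z :=
    ciInf_le (bddBelow_range_of_abs_le fun g => abs_empLoss_le hf g z) g₀
  linarith

theorem ofReal_one_sub_le_measure_expLoss_lt [Countable ι] [Nonempty ι]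
    (hmeas : ∀ g, Measurable (f g)) (hf : ∀ g x, |f g x| ≤ 1) (hN : 0 < N)
    {Ĝ : (Fin N → Z) → ι} {e : ℝ} (hĜ : ∀ z, empLoss f N (Ĝ z) z ≤ (⨅ g, empLoss f N g z) + e)
    (g₀ : ι) {s : ℝ} (hs : 0 < s) :
    ENNReal.ofReal (1 - 2 * radComplexity μ f N / s) ≤
      (Measure.pi fun _ : Fin N => μ) {z | expLoss μ f (Ĝ z) < expLoss μ f g₀ + s + e} := by
  let H : (Fin N → Z) → ℝ := fun z =>
    uniformDeviation μ f N z + (empLoss f N g₀ z - expLoss μ f g₀)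
  have hempLoss : Integrable (empLoss f N g₀) (Measure.pi fun _ => μ) :=
    integrable_of_abs_le (measurable_empLoss hmeas g₀) (abs_empLoss_le hf g₀)
  have hdev : Integrable (uniformDeviation μ f N) (Measure.pi fun _ => μ) :=
    integrable_of_abs_le (measurable_uniformDeviation hmeas) (abs_uniformDeviation_le hf)
  have hcentered : Integrable (fun z => empLoss f N g₀ z - expLoss μ f g₀)
      (Measure.pi fun _ => μ) :=
    hempLoss.sub (integrable_const _)
  have hH : ∫ z, H z ∂(Measure.pi fun _ => μ) ≤ 2 * radComplexity μ f N := by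
    simp only [H]
    rw [integral_add hdev hcentered, integral_sub hempLoss (integrable_const _),
      integral_empLoss hmeas hf hN g₀]
    simpa using integral_uniformDeviation_le hmeas hf hN
  calc ENNReal.ofReal (1 - 2 * radComplexity μ f N / s)
      ≤ ENNReal.ofReal (1 - (∫ z, H z ∂(Measure.pi fun _ => μ)) / s) :=
        ENNReal.ofReal_le_ofReal (sub_le_sub_left (by gcongr) 1)
    _ ≤ (Measure.pi fun _ => μ) {z | H z < s} :=
        ofReal_one_sub_integral_div_le_measure_lt (h := H)
          ((measurable_uniformDeviation hmeas).add
            ((measurable_empLoss hmeas g₀).sub measurable_const))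
          (fun z => by linarith [sub_le_uniformDeviation (μ := μ) hf g₀ z])
          (hdev.add hcentered) hs
    _ ≤ _ := measure_mono fun z (hz : H z < s) => by
        have := expLoss_le_of_le_iInf_empLoss_add (μ := μ) hf (hĜ z) g₀
        show expLoss μ f (Ĝ z) < _
        linarith

end ApproximateERM

theorem erm_consistency_general
    (μ : Measure Z) [IsProbabilityMeasure μ] [Countable ι] [Nonempty ι]
    (f : ι → Z → ℝ) (hmeas : ∀ g, Measurable (f g))
    (hbound : ∀ g x, f g x ∈ Set.Icc (0 : ℝ) 1)
    (hC : Filter.Tendsto (fun N => radComplexity μ f N) Filter.atTop (nhds 0))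
    (ε : ℕ → ℝ)
    (hε : Filter.Tendsto ε Filter.atTop (nhds 0))
    (Ghat : (N : ℕ) → (Fin N → Z) → ι)
    (hERM : ∀ N (z : Fin N → Z),
      empLoss f N (Ghat N z) z ≤ (⨅ g : ι, empLoss f N g z) + ε N)
    (δ : ℝ) (hδ : δ ∈ Set.Ioo (0 : ℝ) 1) (ρ : ℝ) (hρ : 0 < ρ) :
    ∃ N₀ : ℕ, ∀ N ≥ N₀,
      (Measure.pi fun _ : Fin N => μ)
        {z | expLoss μ f (Ghat N z) - (⨅ g : ι, expLoss μ f g) ≤ ρ}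
        ≥ ENNReal.ofReal (1 - δ) := by
  have hf : ∀ g x, |f g x| ≤ 1 := fun g x =>
    abs_le.2 ⟨by linarith [(hbound g x).1], (hbound g x).2⟩
  obtain ⟨g₀, hg₀⟩ : ∃ g₀, expLoss μ f g₀ < (⨅ g, expLoss μ f g) + ρ / 4 :=
    exists_lt_of_ciInf_lt (lt_add_of_pos_right _ (by positivity))
  obtain ⟨N₀, hN₀⟩ := eventually_atTop.1 <| (eventually_gt_atTop 0).and <|
    (hε.eventually_lt_const (by positivity : (0 : ℝ) < ρ / 4)).and
      (hC.eventually_lt_const (by nlinarith [hδ.1] : (0 : ℝ) < δ * ρ / 4))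
  refine ⟨N₀, fun N hN => ?_⟩
  obtain ⟨hN, hεN, hCN⟩ := hN₀ N hN
  calc ENNReal.ofReal (1 - δ)
      ≤ ENNReal.ofReal (1 - 2 * radComplexity μ f N / (ρ / 2)) := by
        refine ENNReal.ofReal_le_ofReal (sub_le_sub_left ?_ 1)
        rw [div_le_iff₀ (by positivity)]
        linarith
    _ ≤ (Measure.pi fun _ : Fin N => μ)
          {z | expLoss μ f (Ghat N z) < expLoss μ f g₀ + ρ / 2 + ε N} :=
        ofReal_one_sub_le_measure_expLoss_lt hmeas hf hN (hERM N) g₀ (by positivity)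
    _ ≤ _ := measure_mono fun z (hz : expLoss μ f (Ghat N z) < _) => by
        show _ ≤ ρ
        linarith

/-- **Consistency of ERM** (consequence of Theorem 1): if the Rademacher complexities satisfy
`C(N) → 0` and `Ĝ_N` is an `ε_N`-approximate empirical risk minimizer on an i.i.d. sample of
size `N` with `ε_N → 0`, then for every `δ ∈ (0,1)` and every `ρ > 0` there exists `N₀` such
that for all `N ≥ N₀`, with probability at least `1 - δ`,
`L(Ĝ_N) - inf_{g ∈ ι} L(g) ≤ ρ`. -/
theorem erm_consistency
    (μ : Measure Z) [IsProbabilityMeasure μ] [Countable ι] [Nonempty ι]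
    (f : ι → Z → ℝ) (hmeas : ∀ g, Measurable (f g))
    (hbound : ∀ g x, f g x ∈ Set.Icc (0 : ℝ) 1)
    (hC : Filter.Tendsto (fun N => radComplexity μ f N) Filter.atTop (nhds 0))
    (ε : ℕ → ℝ) (hεnonneg : ∀ N, 0 ≤ ε N)
    (hε : Filter.Tendsto ε Filter.atTop (nhds 0))
    (Ghat : (N : ℕ) → (Fin N → Z) → ι)
    (hERM : ∀ N (z : Fin N → Z),
      empLoss f N (Ghat N z) z ≤ (⨅ g : ι, empLoss f N g z) + ε N)
    (δ : ℝ) (hδ : δ ∈ Set.Ioo (0 : ℝ) 1) (ρ : ℝ) (hρ : 0 < ρ) :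
    ∃ N₀ : ℕ, ∀ N ≥ N₀,
      (Measure.pi fun _ : Fin N => μ)
        {z | expLoss μ f (Ghat N z) - (⨅ g : ι, expLoss μ f g) ≤ ρ}
        ≥ ENNReal.ofReal (1 - δ) :=
  erm_consistency_general μ f hmeas hbound hC ε hε Ghat hERM δ hδ ρ hρ
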